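/- arXiv:2604.19040 — 4 statements merged into one kernel-verified Lean document; each statement's English description precedes it below -/
import Mathlib

section
/- Let W̃, R̃₀ ∈ ℂ^{n×n} be Hermitian positive semidefinite with h^H W̃ h > 0 for a vector h ∈ ℂ^n. Define w = (h^H W̃ h)^{-1/2}·W̃ h and R₀ = R̃₀ + W̃ − w·w^H. Then |w^H h|² = h^H W̃ h, the matrix W̃ − w·w^H is positive semidefinite (hence R₀ is positive semidefinite), and tr(w·w^H) + tr(R₀) = tr(W̃) + tr(R̃₀). -/
open Matrix ComplexOrder

/-!
Cauchy–Schwarz for the semi-inner product `⟪x, y⟫ = xᴴ W̃ y` gives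
`|wᴴ x|² = |hᴴ W̃ x|² / (hᴴ W̃ h) ≤ xᴴ W̃ x` for every `x`, which is the positive semidefiniteness
of `W̃ - w wᴴ`; the power identity is the case `x = h`, and the trace identity is linearity.
-/

namespace Matrix

open RCLike InnerProductSpace

variable {𝕜 ι : Type*} [RCLike 𝕜] [Fintype ι] {M : Matrix ι ι 𝕜}

theorem PosSemidef.norm_sq_dotProduct_mulVec_le (hM : M.PosSemidef) (x y : ι → 𝕜) :
    ‖star x ⬝ᵥ M *ᵥ y‖ ^ 2 ≤ re (star x ⬝ᵥ M *ᵥ x) * re (star y ⬝ᵥ M *ᵥ y) := by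
  let _ := M.toSeminormedAddCommGroup hM
  let _ := M.toInnerProductSpace hM
  have hinner (u v : ι → 𝕜) : ⟪u, v⟫_𝕜 = star u ⬝ᵥ M *ᵥ v := dotProduct_comm _ _
  simpa only [← hinner, sq, norm_inner_symm y x] using inner_mul_inner_self_le (𝕜 := 𝕜) x y

theorem dotProduct_vecMulVec_self_star_mulVec (w x : ι → 𝕜) :
    star x ⬝ᵥ vecMulVec w (star w) *ᵥ x = (‖star w ⬝ᵥ x‖ ^ 2 : ℝ) := by
  rw [vecMulVec_mulVec, op_smul_eq_smul, dotProduct_smul, smul_eq_mul, star_dotProduct x w,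
    ofReal_pow]
  exact RCLike.mul_conj _

theorem PosSemidef.sub_vecMulVec_self_star (hM : M.PosSemidef) {w : ι → 𝕜}
    (hw : ∀ x, ‖star w ⬝ᵥ x‖ ^ 2 ≤ re (star x ⬝ᵥ M *ᵥ x)) :
    (M - vecMulVec w (star w)).PosSemidef := by
  refine .of_dotProduct_mulVec_nonneg
    (hM.isHermitian.sub (posSemidef_vecMulVec_self_star w).isHermitian) fun x => ?_
  rw [sub_mulVec, dotProduct_sub, dotProduct_vecMulVec_self_star_mulVec, sub_nonneg, le_iff_re_im,
    hM.isHermitian.im_star_dotProduct_mulVec_self, ofReal_re, ofReal_im]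
  exact ⟨hw x, rfl⟩

theorem IsHermitian.star_mulVec_dotProduct (hM : M.IsHermitian) (h x : ι → 𝕜) :
    star (M *ᵥ h) ⬝ᵥ x = star h ⬝ᵥ M *ᵥ x := by
  rw [star_mulVec, hM.eq, dotProduct_mulVec]

/-- `0` when `hᴴ M h = 0`, since `0⁻¹ = 0`. -/
noncomputable def rankOneRecovery (M : Matrix ι ι 𝕜) (h : ι → 𝕜) : ι → 𝕜 :=
  ((√(re (star h ⬝ᵥ M *ᵥ h)) : 𝕜))⁻¹ • M *ᵥ h

theorem PosSemidef.norm_sq_star_rankOneRecovery_dotProduct (hM : M.PosSemidef) (h x : ι → 𝕜) :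
    ‖star (M.rankOneRecovery h) ⬝ᵥ x‖ ^ 2 = ‖star h ⬝ᵥ M *ᵥ x‖ ^ 2 / re (star h ⬝ᵥ M *ᵥ h) := by
  rw [rankOneRecovery, star_smul, smul_dotProduct, hM.isHermitian.star_mulVec_dotProduct,
    smul_eq_mul, norm_mul, mul_pow, norm_star, norm_inv, norm_ofReal, abs_of_nonneg (by positivity),
    inv_pow, Real.sq_sqrt (hM.re_dotProduct_nonneg h), inv_mul_eq_div]

theorem PosSemidef.norm_sq_star_rankOneRecovery_dotProduct_self (hM : M.PosSemidef) (h : ι → 𝕜) :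
    ‖star (M.rankOneRecovery h) ⬝ᵥ h‖ ^ 2 = re (star h ⬝ᵥ M *ᵥ h) := by
  have hnorm : ‖star h ⬝ᵥ M *ᵥ h‖ = re (star h ⬝ᵥ M *ᵥ h) := by
    simpa using congrArg re (norm_of_nonneg' (hM.dotProduct_mulVec_nonneg h))
  rw [hM.norm_sq_star_rankOneRecovery_dotProduct, hnorm, sq, mul_self_div_self]

theorem PosSemidef.sub_vecMulVec_rankOneRecovery (hM : M.PosSemidef) (h : ι → 𝕜) :
    (M - vecMulVec (M.rankOneRecovery h) (star (M.rankOneRecovery h))).PosSemidef := by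
  refine hM.sub_vecMulVec_self_star fun x => ?_
  rw [hM.norm_sq_star_rankOneRecovery_dotProduct]
  exact div_le_of_le_mul₀ (hM.re_dotProduct_nonneg h) (hM.re_dotProduct_nonneg x)
    ((hM.norm_sq_dotProduct_mulVec_le h x).trans_eq (mul_comm _ _))

end Matrix

theorem stmt3_general (n : ℕ) (h : Fin n → ℂ) (Wt Rt : Matrix (Fin n) (Fin n) ℂ)
    (hWt : Wt.PosSemidef) (hRt : Rt.PosSemidef)
    (w : Fin n → ℂ)
    (hw : w = ((Real.sqrt (star h ⬝ᵥ Wt.mulVec h).re)⁻¹ : ℂ) • Wt.mulVec h)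
    (R₀ : Matrix (Fin n) (Fin n) ℂ)
    (hR₀ : R₀ = Rt + Wt - vecMulVec w (star w)) :
    ‖star w ⬝ᵥ h‖ ^ 2 = (star h ⬝ᵥ Wt.mulVec h).re ∧
    (Wt - vecMulVec w (star w)).PosSemidef ∧
    R₀.PosSemidef ∧
    (vecMulVec w (star w)).trace + R₀.trace = Wt.trace + Rt.trace := by
  replace hw : w = Wt.rankOneRecovery h := hw
  subst hw hR₀
  have hresidual := hWt.sub_vecMulVec_rankOneRecovery h
  refine ⟨hWt.norm_sq_star_rankOneRecovery_dotProduct_self h, hresidual, ?_, ?_⟩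
  · rw [add_sub_assoc]
    exact hRt.add hresidual
  · rw [trace_sub, trace_add]
    ring

/-- SDR rank-one reconstruction: power toward `h` is preserved, residual is PSD,
    and total power is preserved. -/
theorem stmt3 (n : ℕ) (hn : 0 < n) (h : Fin n → ℂ) (Wt Rt : Matrix (Fin n) (Fin n) ℂ)
    (hWt : Wt.PosSemidef) (hRt : Rt.PosSemidef)
    (hpos : 0 < (star h ⬝ᵥ Wt.mulVec h).re)
    (w : Fin n → ℂ)
    (hw : w = ((Real.sqrt (star h ⬝ᵥ Wt.mulVec h).re)⁻¹ : ℂ) • Wt.mulVec h)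
    (R₀ : Matrix (Fin n) (Fin n) ℂ)
    (hR₀ : R₀ = Rt + Wt - vecMulVec w (star w)) :
    ‖star w ⬝ᵥ h‖ ^ 2 = (star h ⬝ᵥ Wt.mulVec h).re ∧
    (Wt - vecMulVec w (star w)).PosSemidef ∧
    R₀.PosSemidef ∧
    (vecMulVec w (star w)).trace + R₀.trace = Wt.trace + Rt.trace :=
  stmt3_general n h Wt Rt hWt hRt w hw R₀ hR₀
end

section
/- Under the rank-one reconstruction w = (h^H W̃ h)^{-1/2}·W̃ h and R₀ = R̃₀ + W̃ − w·w^H, if the relaxed solution satisfies tr(W̃ h h^H) ≥ γ₀·tr(R̃₀ h h^H) + γ₀σ², then the reconstructed solution satisfies |h^H w|² ≥ γ₀·(h^H R₀ h + σ²), i.e., the SINR constraint is preserved. -/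
/-!
Since `W̃` is positive semidefinite, `c = hᴴ W̃ h` is a nonnegative real, so `hᴴ w = c / √c` and
`|hᴴ w|² = c`. The rank-one term `w wᴴ` therefore removes from `hᴴ R₀ h` exactly the contribution
`c` of `W̃`, leaving `hᴴ R₀ h = hᴴ R̃₀ h`; with `tr (M h hᴴ) = hᴴ M h` the SINR constraint is then
the relaxed one.
-/

open Matrix ComplexOrder

theorem Complex.norm_inv_sqrt_re_mul_sq {z : ℂ} (hz : 0 ≤ z) :
    ‖((Real.sqrt z.re)⁻¹ : ℂ) * z‖ ^ 2 = z.re := by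
  obtain ⟨r, hr, rfl⟩ : ∃ r : ℝ, 0 ≤ r ∧ (r : ℂ) = z :=
    ⟨z.re, (Complex.nonneg_iff.1 hz).1, (Complex.eq_re_of_ofReal_le (r := 0) (mod_cast hz)).symm⟩
  rw [Complex.ofReal_re, ← Complex.ofReal_inv, ← Complex.ofReal_mul, Complex.norm_real,
    Real.norm_eq_abs, sq_abs, mul_pow, inv_pow, Real.sq_sqrt hr, inv_mul_eq_div, sq,
    mul_self_div_self]

namespace Matrix

variable {n R : Type*} [Fintype n]

theorem trace_mul_vecMulVec_star [CommSemiring R] [StarRing R] (M : Matrix n n R) (h : n → R) :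
    (M * vecMulVec h (star h)).trace = star h ⬝ᵥ M *ᵥ h := by
  rw [mul_vecMulVec, trace_vecMulVec, dotProduct_comm]

theorem dotProduct_vecMulVec_star_mulVec [CommSemiring R] [StarRing R] (h w : n → R) :
    star h ⬝ᵥ vecMulVec w (star w) *ᵥ h = (star h ⬝ᵥ w) * star (star h ⬝ᵥ w) := by
  rw [vecMulVec_mulVec, op_smul_eq_smul, dotProduct_smul, smul_eq_mul, mul_comm, star_dotProduct,
    star_star]

theorem re_dotProduct_vecMulVec_star_mulVec (h w : n → ℂ) :
    (star h ⬝ᵥ vecMulVec w (star w) *ᵥ h).re = ‖star h ⬝ᵥ w‖ ^ 2 := by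
  rw [dotProduct_vecMulVec_star_mulVec, Complex.star_def, Complex.mul_conj']
  norm_cast

theorem PosSemidef.norm_dotProduct_normalized_mulVec_sq {W : Matrix n n ℂ} (hW : W.PosSemidef)
    (h : n → ℂ) :
    ‖star h ⬝ᵥ ((Real.sqrt (star h ⬝ᵥ W *ᵥ h).re)⁻¹ : ℂ) • W *ᵥ h‖ ^ 2 =
      (star h ⬝ᵥ W *ᵥ h).re := by
  rw [dotProduct_smul, smul_eq_mul]
  exact Complex.norm_inv_sqrt_re_mul_sq (hW.dotProduct_mulVec_nonneg h)

end Matrix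

theorem stmt4_general (n : ℕ) (h : Fin n → ℂ) (γ₀ σ2 : ℝ)
    (Wt Rt : Matrix (Fin n) (Fin n) ℂ) (hWt : Wt.PosSemidef)
    (w : Fin n → ℂ)
    (hw : w = ((Real.sqrt (star h ⬝ᵥ Wt.mulVec h).re)⁻¹ : ℂ) • Wt.mulVec h)
    (R₀ : Matrix (Fin n) (Fin n) ℂ)
    (hR₀ : R₀ = Rt + Wt - vecMulVec w (star w))
    (hrelax : ((Wt * vecMulVec h (star h)).trace).re ≥
      γ₀ * ((Rt * vecMulVec h (star h)).trace).re + γ₀ * σ2) :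
    ‖star h ⬝ᵥ w‖ ^ 2 ≥ γ₀ * ((star h ⬝ᵥ R₀.mulVec h).re + σ2) := by
  have hgain : ‖star h ⬝ᵥ w‖ ^ 2 = (star h ⬝ᵥ Wt *ᵥ h).re :=
    hw ▸ hWt.norm_dotProduct_normalized_mulVec_sq h
  have hinterference : (star h ⬝ᵥ R₀ *ᵥ h).re = (star h ⬝ᵥ Rt *ᵥ h).re := by
    rw [hR₀, sub_mulVec, add_mulVec, dotProduct_sub, dotProduct_add, Complex.sub_re,
      Complex.add_re, re_dotProduct_vecMulVec_star_mulVec, hgain, add_sub_cancel_right]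
  rw [trace_mul_vecMulVec_star, trace_mul_vecMulVec_star] at hrelax
  rw [hgain, hinterference]
  linarith

/-- The rank-one reconstruction preserves the communication SINR constraint. -/
theorem stmt4 (n : ℕ) (hn : 0 < n) (h : Fin n → ℂ) (γ₀ σ2 : ℝ)
    (hγ : 0 < γ₀) (hσ : 0 < σ2)
    (Wt Rt : Matrix (Fin n) (Fin n) ℂ) (hWt : Wt.PosSemidef) (hRt : Rt.PosSemidef)
    (hpos : 0 < (star h ⬝ᵥ Wt.mulVec h).re)
    (w : Fin n → ℂ)
    (hw : w = ((Real.sqrt (star h ⬝ᵥ Wt.mulVec h).re)⁻¹ : ℂ) • Wt.mulVec h)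
    (R₀ : Matrix (Fin n) (Fin n) ℂ)
    (hR₀ : R₀ = Rt + Wt - vecMulVec w (star w))
    (hrelax : ((Wt * vecMulVec h (star h)).trace).re ≥
      γ₀ * ((Rt * vecMulVec h (star h)).trace).re + γ₀ * σ2) :
    ‖star h ⬝ᵥ w‖ ^ 2 ≥ γ₀ * ((star h ⬝ᵥ R₀.mulVec h).re + σ2) :=
  stmt4_general n h γ₀ σ2 Wt Rt hWt w hw R₀ hR₀ hrelax
end

section
/- Let h, a ∈ ℂ^n with h ≠ 0 and a* not parallel to h. Define e₁ = h/‖h‖ and e₂ = (a* − (e₁^H a*)e₁)/‖a* − (e₁^H a*)e₁‖. For P > 0, γ₀, σ_c² > 0 with γ₀σ_c²/‖h‖² ≤ P, the vector w = x₁e₁ + x₂e₂ with x₁ = √(γ₀σ_c²/‖h‖²)·(e₁^H a*)/|e₁^H a*| and x₂ = √(P − γ₀σ_c²/‖h‖²)·(e₂^H a*)/|e₂^H a*| satisfies ‖w‖² = P, |h^H w|² = γ₀σ_c², and |a^T w|² = (√(γ₀σ_c²)·|h^H a*|/‖h‖² + √((P − γ₀σ_c²/‖h‖²)·(‖a‖²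 − |h^H a*|²/‖h‖²)))². -/
/-!
`e₁, e₂` is the Gram–Schmidt orthonormalisation of `h, a*`, so `‖w‖² = |x₁|² + |x₂|²` and
`hᴴw = ‖h‖ x₁`. The phases of `x₁, x₂` are those of `e₁ᴴa*, e₂ᴴa*`, so both contributions to
`aᵀw = ⟪a*, w⟫` are real and nonnegative and add up coherently to
`|x₁| |e₁ᴴa*| + |x₂| ‖v‖`, where `e₂ᴴa* = ‖v‖` and `‖v‖² = ‖a‖² - |e₁ᴴa*|²` by Pythagoras.
Vectors of `Fin n → ℂ` are read in `EuclideanSpace ℂ (Fin n)`, where `star x ⬝ᵥ y` is the inner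
product and `∑ i, ‖x i‖ ^ 2` the squared norm.
-/

open scoped InnerProductSpace ComplexConjugate

section InnerProductSpace

variable {𝕜 E : Type*} [RCLike 𝕜] [NormedAddCommGroup E] [InnerProductSpace 𝕜 E]

theorem ofReal_mul_div_norm_mul_conj (r : ℝ) (z : 𝕜) :
    (r : 𝕜) * (z / ‖z‖) * conj z = ((r * ‖z‖ : ℝ) : 𝕜) := by
  rcases eq_or_ne z 0 with rfl | hz
  · simp
  have hz' : (‖z‖ : 𝕜) ≠ 0 := by simpa using hz
  rw [mul_assoc, div_mul_eq_mul_div, RCLike.mul_conj]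
  push_cast
  field_simp

theorem norm_ofReal_mul_div_norm {r : ℝ} (hr : 0 ≤ r) {z : 𝕜} (hz : z ≠ 0) :
    ‖(r : 𝕜) * (z / ‖z‖)‖ = r := by
  simp [norm_mul, norm_div, hz, hr]

theorem norm_inner_phase_aligned (b e₁ e₂ : E) {r₁ r₂ : ℝ} (hr₁ : 0 ≤ r₁) (hr₂ : 0 ≤ r₂) :
    ‖⟪b, ((r₁ : 𝕜) * (⟪e₁, b⟫_𝕜 / ‖⟪e₁, b⟫_𝕜‖)) • e₁
      + ((r₂ : 𝕜) * (⟪e₂, b⟫_𝕜 / ‖⟪e₂, b⟫_𝕜‖)) • e₂⟫_𝕜‖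
      = r₁ * ‖⟪e₁, b⟫_𝕜‖ + r₂ * ‖⟪e₂, b⟫_𝕜‖ := by
  rw [inner_add_right, inner_smul_right, inner_smul_right, ← inner_conj_symm b e₁,
    ← inner_conj_symm b e₂, ofReal_mul_div_norm_mul_conj, ofReal_mul_div_norm_mul_conj,
    ← RCLike.ofReal_add, RCLike.norm_ofReal, abs_of_nonneg (by positivity)]

theorem inner_inv_norm_smul_eq_norm {v b : E} (hvb : ⟪v, b⟫_𝕜 = ((‖v‖ ^ 2 : ℝ) : 𝕜)) :
    ⟪((‖v‖⁻¹ : ℝ) : 𝕜) • v, b⟫_𝕜 = ‖v‖ := by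
  rw [inner_smul_left, hvb, RCLike.conj_ofReal, ← RCLike.ofReal_mul, inv_mul_eq_div, sq,
    mul_self_div_self]

theorem norm_inv_norm_smul {x : E} (hx : x ≠ 0) : ‖((‖x‖⁻¹ : ℝ) : 𝕜) • x‖ = 1 := by
  rw [RCLike.ofReal_inv]
  exact norm_smul_inv_norm hx

theorem norm_smul_add_smul_sq {e₁ e₂ : E} (he₁ : ‖e₁‖ = 1) (h₁₂ : ⟪e₁, e₂⟫_𝕜 = 0)
    (he₂ : ‖e₂‖ = 1) (x₁ x₂ : 𝕜) : ‖x₁ • e₁ + x₂ • e₂‖ ^ 2 = ‖x₁‖ ^ 2 + ‖x₂‖ ^ 2 := by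
  rw [norm_add_sq (𝕜 := 𝕜), inner_smul_left, inner_smul_right, h₁₂, norm_smul, norm_smul,
    he₁, he₂]
  simp

theorem inner_smul_add_smul_left {e₁ e₂ : E} (he₁ : ‖e₁‖ = 1) (h₁₂ : ⟪e₁, e₂⟫_𝕜 = 0)
    (x₁ x₂ : 𝕜) : ⟪e₁, x₁ • e₁ + x₂ • e₂⟫_𝕜 = x₁ := by
  simp [inner_add_right, inner_smul_right, inner_self_eq_norm_sq_to_K, he₁, h₁₂]

section GramSchmidt

variable {e : E}

theorem inner_sub_inner_smul_eq_zero (he : ‖e‖ = 1) (b : E) :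
    ⟪e, b - ⟪e, b⟫_𝕜 • e⟫_𝕜 = 0 := by
  simp [inner_sub_right, inner_smul_right, inner_self_eq_norm_sq_to_K, he]

theorem inner_sub_inner_smul_smul_eq_zero (he : ‖e‖ = 1) (b : E) (c : 𝕜) :
    ⟪b - ⟪e, b⟫_𝕜 • e, c • e⟫_𝕜 = 0 := by
  rw [inner_smul_right, ← inner_conj_symm, inner_sub_inner_smul_eq_zero he, map_zero, mul_zero]

theorem norm_sub_inner_smul_sq (he : ‖e‖ = 1) (b : E) :
    ‖b - ⟪e, b⟫_𝕜 • e‖ ^ 2 = ‖b‖ ^ 2 - ‖⟪e, b⟫_𝕜‖ ^ 2 := by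
  have := norm_add_sq (𝕜 := 𝕜) (b - ⟪e, b⟫_𝕜 • e) (⟪e, b⟫_𝕜 • e)
  rw [sub_add_cancel, inner_sub_inner_smul_smul_eq_zero he, norm_smul, he] at this
  simp only [map_zero, mul_zero, add_zero, mul_one] at this
  linarith

theorem inner_sub_inner_smul_self (he : ‖e‖ = 1) (b : E) :
    ⟪b - ⟪e, b⟫_𝕜 • e, b⟫_𝕜 = ((‖b - ⟪e, b⟫_𝕜 • e‖ ^ 2 : ℝ) : 𝕜) := by
  calc ⟪b - ⟪e, b⟫_𝕜 • e, b⟫_𝕜 = ⟪b - ⟪e, b⟫_𝕜 • e, b - ⟪e, b⟫_𝕜 • e + ⟪e, b⟫_𝕜 • e⟫_𝕜 := by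
        rw [sub_add_cancel]
    _ = ((‖b - ⟪e, b⟫_𝕜 • e‖ ^ 2 : ℝ) : 𝕜) := by
        rw [inner_add_right, inner_sub_inner_smul_smul_eq_zero he, add_zero,
          inner_self_eq_norm_sq_to_K, RCLike.ofReal_pow]

end GramSchmidt

theorem kkt_beamformer_spec {h b e₁ v e₂ w : E} {P s : ℝ} (hh : h ≠ 0) (hb : ∀ c : 𝕜, b ≠ c • h)
    (hs : 0 ≤ s) (hfeas : s / ‖h‖ ^ 2 ≤ P)
    (he₁ : e₁ = ((‖h‖⁻¹ : ℝ) : 𝕜) • h) (hv : v = b - ⟪e₁, b⟫_𝕜 • e₁)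
    (he₂ : e₂ = ((‖v‖⁻¹ : ℝ) : 𝕜) • v) (hphase : ⟪e₁, b⟫_𝕜 ≠ 0)
    (hw : w = (((√(s / ‖h‖ ^ 2) : ℝ) : 𝕜) * (⟪e₁, b⟫_𝕜 / ((‖⟪e₁, b⟫_𝕜‖ : ℝ) : 𝕜))) • e₁
      + (((√(P - s / ‖h‖ ^ 2) : ℝ) : 𝕜) * (⟪e₂, b⟫_𝕜 / ((‖⟪e₂, b⟫_𝕜‖ : ℝ) : 𝕜))) • e₂) :
    ‖w‖ ^ 2 = P ∧ ‖⟪h, w⟫_𝕜‖ ^ 2 = s ∧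
    ‖⟪b, w⟫_𝕜‖ ^ 2 = (√s * ‖⟪h, b⟫_𝕜‖ / ‖h‖ ^ 2
      + √((P - s / ‖h‖ ^ 2) * (‖b‖ ^ 2 - ‖⟪h, b⟫_𝕜‖ ^ 2 / ‖h‖ ^ 2))) ^ 2 := by
  have hh₀ : 0 < ‖h‖ := norm_pos_iff.2 hh
  have he₁₁ : ‖e₁‖ = 1 := he₁ ▸ norm_inv_norm_smul hh
  have hv₀ : v ≠ 0 := by
    rintro rfl
    refine hb (⟪e₁, b⟫_𝕜 * ((‖h‖⁻¹ : ℝ) : 𝕜)) ?_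
    rw [mul_smul, ← he₁]
    exact sub_eq_zero.1 hv.symm
  have he₂₂ : ‖e₂‖ = 1 := he₂ ▸ norm_inv_norm_smul hv₀
  have h₁₂ : ⟪e₁, e₂⟫_𝕜 = 0 := by
    rw [he₂, inner_smul_right, hv, inner_sub_inner_smul_eq_zero he₁₁, mul_zero]
  have hz₂ : ⟪e₂, b⟫_𝕜 = ‖v‖ :=
    he₂ ▸ inner_inv_norm_smul_eq_norm (hv ▸ inner_sub_inner_smul_self he₁₁ b)
  have hz₂₀ : ⟪e₂, b⟫_𝕜 ≠ 0 := by
    rw [hz₂]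
    exact_mod_cast norm_ne_zero_iff.2 hv₀
  have hhe₁ : h = ((‖h‖ : ℝ) : 𝕜) • e₁ := by
    rw [he₁, smul_smul, ← RCLike.ofReal_mul, mul_inv_cancel₀ hh₀.ne', RCLike.ofReal_one, one_smul]
  have hz₁ : ‖⟪e₁, b⟫_𝕜‖ = ‖⟪h, b⟫_𝕜‖ / ‖h‖ := by
    rw [he₁, inner_smul_left, norm_mul, RCLike.norm_conj, RCLike.norm_ofReal, abs_inv, abs_norm,
      inv_mul_eq_div]
  have hv_sq : ‖v‖ ^ 2 = ‖b‖ ^ 2 - ‖⟪h, b⟫_𝕜‖ ^ 2 / ‖h‖ ^ 2 := by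
    rw [hv, norm_sub_inner_smul_sq he₁₁, hz₁, div_pow]
  have hr₁ : √(s / ‖h‖ ^ 2) = √s / ‖h‖ := by
    rw [Real.sqrt_div' _ (sq_nonneg _), Real.sqrt_sq hh₀.le]
  refine ⟨?_, ?_, ?_⟩
  · rw [hw, norm_smul_add_smul_sq he₁₁ h₁₂ he₂₂,
      norm_ofReal_mul_div_norm (Real.sqrt_nonneg _) hphase,
      norm_ofReal_mul_div_norm (Real.sqrt_nonneg _) hz₂₀,
      Real.sq_sqrt (by positivity), Real.sq_sqrt (by linarith)]
    ring
  · rw [hhe₁, inner_smul_left, RCLike.conj_ofReal, hw, inner_smul_add_smul_left he₁₁ h₁₂,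
      norm_mul, RCLike.norm_ofReal, abs_norm, norm_ofReal_mul_div_norm (Real.sqrt_nonneg _) hphase,
      mul_pow, Real.sq_sqrt (by positivity)]
    field_simp
  · rw [hw, norm_inner_phase_aligned _ _ _ (Real.sqrt_nonneg _) (Real.sqrt_nonneg _), hz₂,
      RCLike.norm_ofReal, abs_norm, hz₁, hr₁, ← hv_sq, Real.sqrt_mul (by linarith),
      Real.sqrt_sq (norm_nonneg _)]
    ring

end InnerProductSpace

section EuclideanSpace

variable {𝕜 ι : Type*} [RCLike 𝕜] [Fintype ι]

theorem star_dotProduct_eq_inner (x y : ι → 𝕜) :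
    star x ⬝ᵥ y = ⟪WithLp.toLp 2 x, WithLp.toLp 2 y⟫_𝕜 := by
  rw [EuclideanSpace.inner_toLp_toLp, dotProduct_comm]

theorem sum_norm_sq_eq_norm_toLp_sq (x : ι → 𝕜) :
    ∑ i, ‖x i‖ ^ 2 = ‖WithLp.toLp 2 x‖ ^ 2 :=
  (EuclideanSpace.norm_sq_eq _).symm

theorem sqrt_sum_norm_sq_eq_norm_toLp (x : ι → 𝕜) :
    √(∑ i, ‖x i‖ ^ 2) = ‖WithLp.toLp 2 x‖ :=
  (EuclideanSpace.norm_eq _).symm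

end EuclideanSpace

theorem stmt11_general (n : ℕ) (h a : Fin n → ℂ) (hh : h ≠ 0)
    (hnp : ∀ c : ℂ, star a ≠ c • h)
    (P γ₀ σc2 : ℝ) (hγ₀ : 0 < γ₀) (hσ : 0 < σc2)
    (nh : ℝ) (hnh : nh = Real.sqrt (∑ i, ‖h i‖ ^ 2))
    (e₁ : Fin n → ℂ) (he₁ : e₁ = ((nh⁻¹ : ℝ) : ℂ) • h)
    (v : Fin n → ℂ) (hv : v = star a - (star e₁ ⬝ᵥ star a) • e₁)
    (e₂ : Fin n → ℂ)
    (he₂ : e₂ = (((Real.sqrt (∑ i, ‖v i‖ ^ 2))⁻¹ : ℝ) : ℂ) • v)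
    (hfeas : γ₀ * σc2 / nh ^ 2 ≤ P)
    (hphase : star e₁ ⬝ᵥ star a ≠ 0)
    (x₁ x₂ : ℂ)
    (hx₁ : x₁ = ((Real.sqrt (γ₀ * σc2 / nh ^ 2) : ℝ) : ℂ) *
      ((star e₁ ⬝ᵥ star a) / ((‖star e₁ ⬝ᵥ star a‖ : ℝ) : ℂ)))
    (hx₂ : x₂ = ((Real.sqrt (P - γ₀ * σc2 / nh ^ 2) : ℝ) : ℂ) *
      ((star e₂ ⬝ᵥ star a) / ((‖star e₂ ⬝ᵥ star a‖ : ℝ) : ℂ)))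
    (w : Fin n → ℂ) (hw : w = x₁ • e₁ + x₂ • e₂) :
    (∑ i, ‖w i‖ ^ 2 = P) ∧ (‖star h ⬝ᵥ w‖ ^ 2 = γ₀ * σc2) ∧
    ‖a ⬝ᵥ w‖ ^ 2
      = (Real.sqrt (γ₀ * σc2) * ‖star h ⬝ᵥ star a‖ / nh ^ 2
        + Real.sqrt ((P - γ₀ * σc2 / nh ^ 2) *
            ((∑ i, ‖a i‖ ^ 2) - ‖star h ⬝ᵥ star a‖ ^ 2 / nh ^ 2))) ^ 2 := by
  have hnh' : nh = ‖WithLp.toLp 2 h‖ := hnh.trans (sqrt_sum_norm_sq_eq_norm_toLp h)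
  have haw : a ⬝ᵥ w = star (star a) ⬝ᵥ w := by rw [star_star]
  have hna : ∑ i, ‖a i‖ ^ 2 = ∑ i, ‖star a i‖ ^ 2 := by simp
  obtain ⟨hpow, hsnr, hbeam⟩ := kkt_beamformer_spec (h := WithLp.toLp 2 h)
    (b := WithLp.toLp 2 (star a)) (e₁ := WithLp.toLp 2 e₁) (v := WithLp.toLp 2 v)
    (e₂ := WithLp.toLp 2 e₂) (w := WithLp.toLp 2 w)
    (by simpa using hh) (fun c hc => hnp c (congrArg WithLp.ofLp hc))
    (by positivity : 0 ≤ γ₀ * σc2) (hnh' ▸ hfeas)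
    (by rw [he₁, hnh']; rfl) (by rw [hv, star_dotProduct_eq_inner]; rfl)
    (by rw [he₂, sqrt_sum_norm_sq_eq_norm_toLp]; rfl)
    (by rwa [star_dotProduct_eq_inner] at hphase)
    (by rw [hw, hx₁, hx₂, star_dotProduct_eq_inner, star_dotProduct_eq_inner, hnh']; rfl)
  rw [haw, hna, hnh']
  simp only [sum_norm_sq_eq_norm_toLp_sq, star_dotProduct_eq_inner]
  exact ⟨hpow, hsnr, hbeam⟩

/-- The two-dimensional KKT beamformer `w = x₁e₁ + x₂e₂` meets the power constraint
    with equality, meets the SNR constraint with equality, and attains the stated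
    sensing beampattern value. -/
theorem stmt11 (n : ℕ) (hn : 0 < n) (h a : Fin n → ℂ) (hh : h ≠ 0)
    (hnp : ∀ c : ℂ, star a ≠ c • h)
    (P γ₀ σc2 : ℝ) (hP : 0 < P) (hγ₀ : 0 < γ₀) (hσ : 0 < σc2)
    (nh : ℝ) (hnh : nh = Real.sqrt (∑ i, ‖h i‖ ^ 2))
    (e₁ : Fin n → ℂ) (he₁ : e₁ = ((nh⁻¹ : ℝ) : ℂ) • h)
    (v : Fin n → ℂ) (hv : v = star a - (star e₁ ⬝ᵥ star a) • e₁)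
    (e₂ : Fin n → ℂ)
    (he₂ : e₂ = (((Real.sqrt (∑ i, ‖v i‖ ^ 2))⁻¹ : ℝ) : ℂ) • v)
    (hfeas : γ₀ * σc2 / nh ^ 2 ≤ P)
    (hphase : star e₁ ⬝ᵥ star a ≠ 0)
    (x₁ x₂ : ℂ)
    (hx₁ : x₁ = ((Real.sqrt (γ₀ * σc2 / nh ^ 2) : ℝ) : ℂ) *
      ((star e₁ ⬝ᵥ star a) / ((‖star e₁ ⬝ᵥ star a‖ : ℝ) : ℂ)))
    (hx₂ : x₂ = ((Real.sqrt (P - γ₀ * σc2 / nh ^ 2) : ℝ) : ℂ) *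
      ((star e₂ ⬝ᵥ star a) / ((‖star e₂ ⬝ᵥ star a‖ : ℝ) : ℂ)))
    (w : Fin n → ℂ) (hw : w = x₁ • e₁ + x₂ • e₂) :
    (∑ i, ‖w i‖ ^ 2 = P) ∧ (‖star h ⬝ᵥ w‖ ^ 2 = γ₀ * σc2) ∧
    ‖a ⬝ᵥ w‖ ^ 2
      = (Real.sqrt (γ₀ * σc2) * ‖star h ⬝ᵥ star a‖ / nh ^ 2
        + Real.sqrt ((P - γ₀ * σc2 / nh ^ 2) *
            ((∑ i, ‖a i‖ ^ 2) - ‖star h ⬝ᵥ star a‖ ^ 2 / nh ^ 2))) ^ 2 :=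
  stmt11_general n h a hh hnp P γ₀ σc2 hγ₀ hσ nh hnh e₁ he₁ v hv e₂ he₂ hfeas hphase x₁ x₂ hx₁ hx₂ w
    hw
end

section
/- Under the setup of the two-dimensional KKT beamformer, with ‖a‖² = n, the value |a^T w|² = (√(γ₀σ_c²)|h^H a*|/‖h‖² + √((P − γ₀σ_c²/‖h‖²)(‖a‖² − |h^H a*|²/‖h‖²)))² is the maximum of |a^T w|² over all w ∈ ℂ^n satisfying |h^H w|² ≥ γ₀σ_c² and ‖w‖² ≤ P, provided γ₀σ_c²/‖h‖² ≤ P and γ₀ > P|h^H a*|²/(n σ_c²). -/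
open scoped InnerProductSpace ComplexConjugate

section Proj
variable {E : Type*} [NormedAddCommGroup E] [InnerProductSpace ℂ E]

lemma inner_self_c (x : E) : ⟪x, x⟫_ℂ = ((‖x‖ ^ 2 : ℝ) : ℂ) := by
  rw [inner_self_eq_norm_sq_to_K]; norm_cast

lemma mul_conj_c (z : ℂ) : z * conj z = ((‖z‖ ^ 2 : ℝ) : ℂ) := by
  rw [Complex.mul_conj]; norm_cast; rw [Complex.normSq_eq_norm_sq]

lemma proj_inner (h v : E) (hh : h ≠ 0) :
    ⟪h, v - (⟪h, v⟫_ℂ / ((‖h‖ ^ 2 : ℝ) : ℂ)) • h⟫_ℂ = 0 := by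
  have hnc : ((‖h‖ ^ 2 : ℝ) : ℂ) ≠ 0 := by
    exact_mod_cast pow_ne_zero 2 (norm_ne_zero_iff.2 hh)
  rw [inner_sub_right, inner_smul_right, inner_self_c, div_mul_cancel₀ _ hnc, sub_self]

lemma proj_norm_sq (h v : E) (hh : h ≠ 0) :
    ‖v - (⟪h, v⟫_ℂ / ((‖h‖ ^ 2 : ℝ) : ℂ)) • h‖ ^ 2 = ‖v‖ ^ 2 - ‖⟪h, v⟫_ℂ‖ ^ 2 / ‖h‖ ^ 2 := by
  have hnc : ((‖h‖ ^ 2 : ℝ) : ℂ) ≠ 0 := by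
    exact_mod_cast pow_ne_zero 2 (norm_ne_zero_iff.2 hh)
  have h2 := proj_inner h v hh
  set t := ⟪h, v⟫_ℂ with ht
  set vp := v - (t / ((‖h‖ ^ 2 : ℝ) : ℂ)) • h with hvp
  clear_value t vp
  have h1 : ⟪vp, vp⟫_ℂ = ⟪v, vp⟫_ℂ := by
    rw [hvp]; rw [inner_sub_left, inner_smul_left, ← hvp, h2, mul_zero, sub_zero]
  have h3 : ⟪v, vp⟫_ℂ = ((‖v‖ ^ 2 : ℝ) : ℂ) - t / ((‖h‖ ^ 2 : ℝ) : ℂ) * conj t := by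
    rw [hvp, inner_sub_right, inner_smul_right, inner_self_c,
      ← inner_conj_symm v h, ← ht]
  have h4 : ((‖vp‖ ^ 2 : ℝ) : ℂ) = ((‖v‖ ^ 2 - ‖t‖ ^ 2 / ‖h‖ ^ 2 : ℝ) : ℂ) := by
    rw [← inner_self_c, h1, h3, div_mul_eq_mul_div, mul_conj_c]
    norm_cast
  exact_mod_cast h4

end Proj

lemma scalar_key (A B p p₀ q q₀ : ℝ) (hA : 0 ≤ A) (hB : 0 ≤ B) (hp₀ : 0 ≤ p₀) (hp : p₀ ≤ p)
    (hq : 0 ≤ q) (hq₀ : q ≤ q₀) (hsum : p ^ 2 + q ^ 2 = p₀ ^ 2 + q₀ ^ 2)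
    (hbind : A * q₀ ≤ B * p₀) :
    A * p + B * q ≤ A * p₀ + B * q₀ := by
  rcases eq_or_lt_of_le (le_trans hp₀ hp) with h0 | h0
  · have hp0 : p = 0 := h0.symm
    have hp₀0 : p₀ = 0 := le_antisymm (hp0 ▸ hp) hp₀
    have : q = q₀ := by nlinarith
    simp [hp0, hp₀0, this]
  · have hAq : A * q ≤ B * p := le_trans (by nlinarith) (le_trans hbind (by nlinarith))
    have key : (A * p + B * q - (A * p₀ + B * q₀)) * (p + p₀) =
        (q₀ - q) * (A * (q₀ + q) - B * (p + p₀)) := by nlinarith [hsum]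
    nlinarith [mul_nonneg (sub_nonneg.2 hq₀) (sub_nonneg.2 (add_le_add hAq hbind))]

theorem key {E : Type*} [NormedAddCommGroup E] [InnerProductSpace ℂ E]
    (h av : E) (hh : h ≠ 0) (N P g : ℝ) (hN : ‖av‖ ^ 2 = N)
    (hP : 0 < P) (hg : 0 < g) (hgle : g ≤ P * ‖h‖ ^ 2)
    (hlt : P * ‖⟪h, av⟫_ℂ‖ ^ 2 < N * g) :
    IsGreatest {val : ℝ | ∃ w : E, ‖⟪h, w⟫_ℂ‖ ^ 2 ≥ g ∧ ‖w‖ ^ 2 ≤ P ∧ val = ‖⟪av, w⟫_ℂ‖ ^ 2}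
      ((Real.sqrt g * ‖⟪h, av⟫_ℂ‖ / ‖h‖ ^ 2
        + Real.sqrt ((P - g / ‖h‖ ^ 2) * (N - ‖⟪h, av⟫_ℂ‖ ^ 2 / ‖h‖ ^ 2))) ^ 2) := by
  have hhn : 0 < ‖h‖ := norm_pos_iff.2 hh
  have hH : 0 < ‖h‖ ^ 2 := by positivity
  have hHc : ((‖h‖ ^ 2 : ℝ) : ℂ) ≠ 0 := by exact_mod_cast hH.ne'
  set c := ⟪h, av⟫_ℂ with hc
  have hNpos : 0 < N := by nlinarith [sq_nonneg ‖c‖, mul_nonneg hP.le (sq_nonneg ‖c‖)]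
  have hB2pos : 0 < N - ‖c‖ ^ 2 / ‖h‖ ^ 2 := by
    rw [sub_pos, div_lt_iff₀ hH]; nlinarith
  have hPg : 0 ≤ P - g / ‖h‖ ^ 2 := by
    rw [sub_nonneg, div_le_iff₀ hH]; nlinarith
  have hval : Real.sqrt g * ‖c‖ / ‖h‖ ^ 2
      + Real.sqrt ((P - g / ‖h‖ ^ 2) * (N - ‖c‖ ^ 2 / ‖h‖ ^ 2))
      = (‖c‖ / ‖h‖) * (Real.sqrt g / ‖h‖)
        + Real.sqrt (N - ‖c‖ ^ 2 / ‖h‖ ^ 2) * Real.sqrt (P - g / ‖h‖ ^ 2) := by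
    rw [Real.sqrt_mul hPg]
    rw [mul_comm (Real.sqrt (P - g / ‖h‖ ^ 2))]
    congr 1
    field_simp
  rw [hval]
  set A := ‖c‖ / ‖h‖ with hA
  set p₀ := Real.sqrt g / ‖h‖ with hp₀
  set B := Real.sqrt (N - ‖c‖ ^ 2 / ‖h‖ ^ 2) with hB
  set q₀ := Real.sqrt (P - g / ‖h‖ ^ 2) with hq₀
  have hAnn : 0 ≤ A := div_nonneg (norm_nonneg _) (norm_nonneg _)
  have hp₀nn : 0 ≤ p₀ := div_nonneg (Real.sqrt_nonneg _) (norm_nonneg _)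
  have hBpos : 0 < B := Real.sqrt_pos.2 hB2pos
  have hq₀nn : 0 ≤ q₀ := Real.sqrt_nonneg _
  have hA2 : A ^ 2 = ‖c‖ ^ 2 / ‖h‖ ^ 2 := by rw [hA, div_pow]
  have hp₀2 : p₀ ^ 2 = g / ‖h‖ ^ 2 := by rw [hp₀, div_pow, Real.sq_sqrt hg.le]
  have hB2 : B ^ 2 = N - ‖c‖ ^ 2 / ‖h‖ ^ 2 := Real.sq_sqrt hB2pos.le
  have hq₀2 : q₀ ^ 2 = P - g / ‖h‖ ^ 2 := Real.sq_sqrt hPg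
  clear_value A p₀ B q₀
  have hbind : A * q₀ ≤ B * p₀ := by
    have h1 : (A * q₀) ^ 2 ≤ (B * p₀) ^ 2 := by
      rw [mul_pow, mul_pow, hA2, hp₀2, hB2, hq₀2]
      have key2 : (N - ‖c‖ ^ 2 / ‖h‖ ^ 2) * (g / ‖h‖ ^ 2)
          - ‖c‖ ^ 2 / ‖h‖ ^ 2 * (P - g / ‖h‖ ^ 2) = (N * g - P * ‖c‖ ^ 2) / ‖h‖ ^ 2 := by
        field_simp
        ring
      have hpos : 0 < (N * g - P * ‖c‖ ^ 2) / ‖h‖ ^ 2 := div_pos (by linarith) hH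
      linarith
    calc A * q₀ = Real.sqrt ((A * q₀) ^ 2) := (Real.sqrt_sq (mul_nonneg hAnn hq₀nn)).symm
      _ ≤ Real.sqrt ((B * p₀) ^ 2) := Real.sqrt_le_sqrt h1
      _ = B * p₀ := Real.sqrt_sq (mul_nonneg hBpos.le hp₀nn)
  -- the projection vector b
  set b := av - (c / ((‖h‖ ^ 2 : ℝ) : ℂ)) • h with hbdef
  have hhb : ⟪h, b⟫_ℂ = 0 := by rw [hbdef, hc]; exact proj_inner h av hh
  have hbn : ‖b‖ ^ 2 = N - ‖c‖ ^ 2 / ‖h‖ ^ 2 := by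
    rw [hbdef, hc]
    rw [proj_norm_sq h av hh, hN, ← hc]
  have hbB : ‖b‖ = B := by
    rw [← Real.sqrt_sq (norm_nonneg b), hbn, hB]
  have havdec : av = b + (c / ((‖h‖ ^ 2 : ℝ) : ℂ)) • h := by rw [hbdef]; abel
  have havb : ⟪av, b⟫_ℂ = ((‖b‖ ^ 2 : ℝ) : ℂ) := by
    conv_lhs => rw [havdec]
    rw [inner_add_left, inner_smul_left, hhb, mul_zero, add_zero, inner_self_c]
  constructor
  · -- membership
    set u : ℂ := if c = 0 then 1 else c / ((‖c‖ : ℝ) : ℂ) with hu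
    have hun : ‖u‖ = 1 := by
      rw [hu]
      split_ifs with h0
      · simp
      · rw [norm_div, Complex.norm_real, Real.norm_eq_abs, abs_norm,
          div_self (norm_ne_zero_iff.2 h0)]
    have huc : u * conj c = ((‖c‖ : ℝ) : ℂ) := by
      rw [hu]
      split_ifs with h0
      · simp [h0]
      · rw [div_mul_eq_mul_div, mul_conj_c]
        rw [show ((‖c‖ ^ 2 : ℝ) : ℂ) = ((‖c‖ : ℝ) : ℂ) * ((‖c‖ : ℝ) : ℂ) by push_cast; ring]
        rw [mul_div_assoc]
        rw [div_self (by exact_mod_cast norm_ne_zero_iff.2 h0), mul_one]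
    set x : ℂ := (((Real.sqrt g / ‖h‖ ^ 2 : ℝ) : ℂ)) * u with hx
    set y : ℂ := (((q₀ / B : ℝ)) : ℂ) with hy
    refine ⟨x • h + y • b, ?_, ?_, ?_⟩
    · -- SNR constraint
      have h1 : ⟪h, x • h + y • b⟫_ℂ = x * ((‖h‖ ^ 2 : ℝ) : ℂ) := by
        rw [inner_add_right, inner_smul_right, inner_smul_right, hhb, mul_zero, add_zero,
          inner_self_c]
      rw [h1]
      have h2 : ‖x * ((‖h‖ ^ 2 : ℝ) : ℂ)‖ = Real.sqrt g := by
        rw [norm_mul, hx, norm_mul, hun, mul_one, Complex.norm_real, Complex.norm_real,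
          Real.norm_eq_abs, Real.norm_eq_abs, abs_of_nonneg (by positivity),
          abs_of_nonneg hH.le]
        field_simp
      rw [h2, Real.sq_sqrt hg.le]
    · -- power constraint
      have hcross : RCLike.re ⟪x • h, y • b⟫_ℂ = 0 := by
        rw [inner_smul_left, inner_smul_right, hhb]
        simp
      have hpyth := norm_add_sq (𝕜 := ℂ) (x • h) (y • b)
      rw [hcross] at hpyth
      have hxn : ‖x‖ = Real.sqrt g / ‖h‖ ^ 2 := by
        rw [hx, norm_mul, hun, mul_one, Complex.norm_real, Real.norm_eq_abs,
          abs_of_nonneg (by positivity)]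
      have hyn : ‖y‖ = q₀ / B := by
        rw [hy, Complex.norm_real, Real.norm_eq_abs, abs_of_nonneg (by positivity)]
      rw [norm_smul, norm_smul, hxn, hyn, hbB] at hpyth
      rw [hpyth]
      have e1 : (Real.sqrt g / ‖h‖ ^ 2 * ‖h‖) ^ 2 = g / ‖h‖ ^ 2 := by
        rw [mul_pow, div_pow, Real.sq_sqrt hg.le]
        field_simp
      have e2 : (q₀ / B * B) ^ 2 = P - g / ‖h‖ ^ 2 := by
        rw [div_mul_cancel₀ _ hBpos.ne', hq₀2]
      rw [e1, e2]
      simp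
    · -- value
      have h3 : ⟪av, x • h + y • b⟫_ℂ = ((A * p₀ + B * q₀ : ℝ) : ℂ) := by
        rw [inner_add_right, inner_smul_right, inner_smul_right, havb,
          ← inner_conj_symm av h, ← hc]
        have e1 : x * conj c = ((Real.sqrt g * ‖c‖ / ‖h‖ ^ 2 : ℝ) : ℂ) := by
          rw [hx, mul_assoc, huc]
          push_cast
          ring
        have e2 : y * ((‖b‖ ^ 2 : ℝ) : ℂ) = ((q₀ * B : ℝ) : ℂ) := by
          rw [hy, hbB, ← Complex.ofReal_mul, pow_two, ← mul_assoc,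
            div_mul_cancel₀ _ hBpos.ne']
        rw [e1, e2]
        have e3 : Real.sqrt g * ‖c‖ / ‖h‖ ^ 2 = A * p₀ := by
          rw [hA, hp₀]
          field_simp
        rw [e3]
        push_cast
        ring
      rw [h3, Complex.norm_real, Real.norm_eq_abs,
        abs_of_nonneg (by positivity)]
  · -- upper bound
    rintro v ⟨w, hw1, hw2, rfl⟩
    set t := ⟪h, w⟫_ℂ with ht
    set wp := w - (t / ((‖h‖ ^ 2 : ℝ) : ℂ)) • h with hwp
    have hhwp : ⟪h, wp⟫_ℂ = 0 := by rw [hwp, ht]; exact proj_inner h w hh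
    have hwpn : ‖wp‖ ^ 2 = ‖w‖ ^ 2 - ‖t‖ ^ 2 / ‖h‖ ^ 2 := by
      rw [hwp, ht]; exact proj_norm_sq h w hh
    have htP : ‖t‖ ^ 2 ≤ P * ‖h‖ ^ 2 := by
      have h1 : ‖t‖ ≤ ‖h‖ * ‖w‖ := by
        rw [ht]; exact norm_inner_le_norm h w
      calc ‖t‖ ^ 2 ≤ (‖h‖ * ‖w‖) ^ 2 := pow_le_pow_left₀ (norm_nonneg t) h1 2
        _ = ‖h‖ ^ 2 * ‖w‖ ^ 2 := by ring
        _ ≤ ‖h‖ ^ 2 * P := mul_le_mul_of_nonneg_left hw2 hH.le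
        _ = P * ‖h‖ ^ 2 := by ring
    set p := ‖t‖ / ‖h‖ with hp
    set q := Real.sqrt (P - ‖t‖ ^ 2 / ‖h‖ ^ 2) with hqd
    have hPt : 0 ≤ P - ‖t‖ ^ 2 / ‖h‖ ^ 2 := by
      rw [sub_nonneg, div_le_iff₀ hH]; exact htP
    have hp2 : p ^ 2 = ‖t‖ ^ 2 / ‖h‖ ^ 2 := by rw [hp, div_pow]
    have hq2 : q ^ 2 = P - ‖t‖ ^ 2 / ‖h‖ ^ 2 := Real.sq_sqrt hPt
    have hpnn : 0 ≤ p := div_nonneg (norm_nonneg _) (norm_nonneg _)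
    have hqnn : 0 ≤ q := Real.sqrt_nonneg _
    -- decomposition of the inner product
    have hwdec : w = wp + (t / ((‖h‖ ^ 2 : ℝ) : ℂ)) • h := by rw [hwp]; abel
    have hdec : ⟪av, w⟫_ℂ = conj c * t / ((‖h‖ ^ 2 : ℝ) : ℂ) + ⟪b, wp⟫_ℂ := by
      conv_lhs => rw [havdec, hwdec]
      simp only [inner_add_left, inner_add_right, inner_smul_left, inner_smul_right,
        hhwp, hhb, mul_zero, zero_mul, add_zero, zero_add]
      rw [show ⟪b, h⟫_ℂ = conj ⟪h, b⟫_ℂ by rw [inner_conj_symm], hhb]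
      rw [inner_self_c, map_div₀, Complex.conj_ofReal]
      have hhnc : ((‖h‖ : ℝ) : ℂ) ≠ 0 := by exact_mod_cast hhn.ne'
      field_simp
      simp
      ring
    have hbound : ‖⟪av, w⟫_ℂ‖ ≤ A * p + B * q := by
      calc ‖⟪av, w⟫_ℂ‖ ≤ ‖conj c * t / ((‖h‖ ^ 2 : ℝ) : ℂ)‖ + ‖⟪b, wp⟫_ℂ‖ := by
            rw [hdec]; exact norm_add_le _ _
        _ ≤ A * p + B * q := by
            have e1 : ‖conj c * t / ((‖h‖ ^ 2 : ℝ) : ℂ)‖ = A * p := by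
              rw [norm_div, norm_mul, RCLike.norm_conj, Complex.norm_real,
                Real.norm_eq_abs, abs_of_nonneg hH.le, hA, hp,
                div_mul_div_comm, ← pow_two ‖h‖]
            have e2 : ‖⟪b, wp⟫_ℂ‖ ≤ B * q := by
              calc ‖⟪b, wp⟫_ℂ‖ ≤ ‖b‖ * ‖wp‖ := norm_inner_le_norm _ _
                _ ≤ B * q := by
                    rw [hbB]
                    refine mul_le_mul_of_nonneg_left ?_ hBpos.le
                    rw [← Real.sqrt_sq (norm_nonneg wp), hwpn, hqd]
                    exact Real.sqrt_le_sqrt (by linarith)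
            rw [e1]
            linarith [e2]
    have hmono : A * p + B * q ≤ A * p₀ + B * q₀ := by
      apply scalar_key A B p p₀ q q₀ hAnn hBpos.le hp₀nn _ hqnn _ _ hbind
      · -- p₀ ≤ p
        rw [hp₀, hp]
        apply (div_le_div_iff_of_pos_right hhn).2
        calc Real.sqrt g ≤ Real.sqrt (‖t‖ ^ 2) := Real.sqrt_le_sqrt hw1
          _ = ‖t‖ := Real.sqrt_sq (norm_nonneg t)
      · -- q ≤ q₀
        rw [hqd, hq₀]
        apply Real.sqrt_le_sqrt
        have : g / ‖h‖ ^ 2 ≤ ‖t‖ ^ 2 / ‖h‖ ^ 2 := by exact (div_le_div_iff_of_pos_right hH).2 (by linarith)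
        linarith
      · rw [hp2, hq2, hp₀2, hq₀2]; ring
    exact pow_le_pow_left₀ (norm_nonneg _) (le_trans hbound hmono) 2


open Matrix

/-- Optimality of the KKT beamformer value: under
    `P|hᴴa*|²/(nσ_c²) < γ₀ ≤ P‖h‖²/σ_c²`, the stated value is the maximum of
    `|aᵀw|²` over all `w` satisfying the SNR and power constraints. -/
theorem stmt12 (n : ℕ) (hn : 0 < n) (h a : Fin n → ℂ) (hh : h ≠ 0)
    (ha : ∑ i, ‖a i‖ ^ 2 = n)
    (P γ₀ σc2 : ℝ) (hP : 0 < P) (hσ : 0 < σc2)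
    (hlow : P * ‖star h ⬝ᵥ star a‖ ^ 2 / (n * σc2) < γ₀)
    (hhigh : γ₀ ≤ P * (∑ i, ‖h i‖ ^ 2) / σc2) :
    IsGreatest {val : ℝ | ∃ w : Fin n → ℂ, ‖star h ⬝ᵥ w‖ ^ 2 ≥ γ₀ * σc2 ∧
        (∑ i, ‖w i‖ ^ 2) ≤ P ∧ val = ‖a ⬝ᵥ w‖ ^ 2}
      ((Real.sqrt (γ₀ * σc2) * ‖star h ⬝ᵥ star a‖ / (∑ i, ‖h i‖ ^ 2)
        + Real.sqrt ((P - γ₀ * σc2 / (∑ i, ‖h i‖ ^ 2)) *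
            ((n : ℝ) - ‖star h ⬝ᵥ star a‖ ^ 2 / (∑ i, ‖h i‖ ^ 2)))) ^ 2) := by
  have bridge1 : ∀ x y : Fin n → ℂ,
      ⟪(WithLp.equiv 2 (Fin n → ℂ)).symm x, (WithLp.equiv 2 (Fin n → ℂ)).symm y⟫_ℂ
        = star x ⬝ᵥ y := by
    intro x y
    simp [PiLp.inner_apply, dotProduct, RCLike.inner_apply, mul_comm]
  have bridge2 : ∀ x : Fin n → ℂ,
      ∑ i, ‖x i‖ ^ 2 = ‖(WithLp.equiv 2 (Fin n → ℂ)).symm x‖ ^ 2 := by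
    intro x
    rw [EuclideanSpace.norm_eq, Real.sq_sqrt (by positivity)]
    rfl
  set h' : EuclideanSpace ℂ (Fin n) := (WithLp.equiv 2 (Fin n → ℂ)).symm h with hh'def
  set av : EuclideanSpace ℂ (Fin n) := (WithLp.equiv 2 (Fin n → ℂ)).symm (star a) with havdef
  have hh' : h' ≠ 0 := by
    intro h0
    exact hh ((WithLp.equiv 2 (Fin n → ℂ)).symm.injective (by simpa [hh'def] using h0))
  have hN : ‖av‖ ^ 2 = (n : ℝ) := by
    rw [havdef, ← bridge2 (star a), ← ha]
    congr 1
    ext i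
    simp [Pi.star_apply, norm_star]
  have hS : (∑ i, ‖h i‖ ^ 2) = ‖h'‖ ^ 2 := bridge2 h
  have hc1 : star h ⬝ᵥ star a = ⟪h', av⟫_ℂ := (bridge1 h (star a)).symm
  have hγpos : 0 < γ₀ := lt_of_le_of_lt (by positivity) hlow
  have hg : 0 < γ₀ * σc2 := mul_pos hγpos hσ
  have hnσ : 0 < (n : ℝ) * σc2 := by positivity
  have hgle : γ₀ * σc2 ≤ P * ‖h'‖ ^ 2 := by
    rw [← hS]
    have := (le_div_iff₀ hσ).1 hhigh
    linarith
  have hlt : P * ‖⟪h', av⟫_ℂ‖ ^ 2 < (n : ℝ) * (γ₀ * σc2) := by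
    rw [← hc1]
    have := (div_lt_iff₀ hnσ).1 hlow
    nlinarith
  have K := key h' av hh' (n : ℝ) P (γ₀ * σc2) hN hP hg hgle hlt
  rw [hc1, hS]
  have hsets : {val : ℝ | ∃ w : Fin n → ℂ, ‖star h ⬝ᵥ w‖ ^ 2 ≥ γ₀ * σc2 ∧
      (∑ i, ‖w i‖ ^ 2) ≤ P ∧ val = ‖a ⬝ᵥ w‖ ^ 2}
      = {val : ℝ | ∃ w : EuclideanSpace ℂ (Fin n), ‖⟪h', w⟫_ℂ‖ ^ 2 ≥ γ₀ * σc2 ∧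
        ‖w‖ ^ 2 ≤ P ∧ val = ‖⟪av, w⟫_ℂ‖ ^ 2} := by
    ext v
    constructor
    · rintro ⟨w, h1, h2, h3⟩
      refine ⟨(WithLp.equiv 2 (Fin n → ℂ)).symm w, ?_, ?_, ?_⟩
      · rw [hh'def, bridge1 h w]; exact h1
      · rw [← bridge2 w]; exact h2
      · rw [havdef, bridge1 (star a) w, star_star]; exact h3
    · rintro ⟨w, h1, h2, h3⟩
      have hw' : (WithLp.equiv 2 (Fin n → ℂ)).symm ((WithLp.equiv 2 (Fin n → ℂ)) w) = w :=
        (WithLp.equiv 2 (Fin n → ℂ)).symm_apply_apply w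
      refine ⟨(WithLp.equiv 2 (Fin n → ℂ)) w, ?_, ?_, ?_⟩
      · rw [← bridge1 h ((WithLp.equiv 2 (Fin n → ℂ)) w), hw', ← hh'def]
        exact h1
      · rw [bridge2 ((WithLp.equiv 2 (Fin n → ℂ)) w), hw']
        exact h2
      · rw [← star_star a, ← bridge1 (star a) ((WithLp.equiv 2 (Fin n → ℂ)) w), hw',
          ← havdef]
        exact h3
  rw [hsets]
  exact K
end
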